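/- Let I, J ⊆ ℝ be open intervals, let I₁ be C¹ and I₀ continuous on J, and let F : I → ℝ be C⁵ with F' never zero and F(I) ⊆ J. Define Ĩ₁(x) = F'(x)²·I₁(F(x)) - 2S(F)(x) and Ĩ₀(x) = F'(x)F''(x)·I₁(F(x)) + F'(x)³·I₀(F(x)) - (S(F))'(x), where S(F) = F'''/F' - (3/2)(F''/F')². Then r = I₁' - 2I₀ is a relative invariant of weight 3; that is, for all x ∈ I: Ĩ₁'(x) - 2Ĩ₀(x) = F'(x)³·(I₁'(F(x)) - 2I₀(F(x))). -/

import Mathlib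

/-!
Differentiating `Ĩ₁ = F'²·(I₁ ∘ F) - 2 S(F)` by the product and chain rules gives
`2F'F''·(I₁ ∘ F) + F'³·(I₁' ∘ F) - 2 S(F)'`. In `Ĩ₁' - 2Ĩ₀` the `F'F''` terms and the
derivatives of the Schwarzian cancel, which leaves `F'³·(I₁' ∘ F - 2 I₀ ∘ F)`.
-/

open Filter Topology

section IterateDeriv

variable {𝕜 E : Type*} [NontriviallyNormedField 𝕜] [NormedAddCommGroup E] [NormedSpace 𝕜 E]
  {s : Set 𝕜}

theorem ContDiffOn.iterate_deriv_of_isOpen (hs : IsOpen s) {m n : WithTop ℕ∞} :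
    ∀ (k : ℕ) {f : 𝕜 → E}, ContDiffOn 𝕜 n f s → m + k ≤ n → ContDiffOn 𝕜 m (deriv^[k] f) s
  | 0, _, hf, hk => hf.of_le (by simpa using hk)
  | k + 1, _, hf, hk =>
    iterate_deriv_of_isOpen hs k
      (hf.deriv_of_isOpen hs (by push_cast at hk; rwa [← add_assoc] at hk)) le_rfl

theorem ContDiffOn.differentiableAt_iterate_deriv {f : 𝕜 → E} {n : WithTop ℕ∞} {x : 𝕜}
    (hf : ContDiffOn 𝕜 n f s) (hs : IsOpen s) (hx : x ∈ s) {k : ℕ} (hk : 1 + k ≤ n) :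
    DifferentiableAt 𝕜 (deriv^[k] f) x :=
  ((hf.iterate_deriv_of_isOpen hs k hk).contDiffAt (hs.mem_nhds hx)).differentiableAt one_ne_zero

end IterateDeriv

noncomputable def schwarzian (F : ℝ → ℝ) (x : ℝ) : ℝ :=
  deriv (deriv (deriv F)) x / deriv F x - (3 / 2) * (deriv (deriv F) x / deriv F x) ^ 2

theorem differentiableAt_schwarzian {F : ℝ → ℝ} {s : Set ℝ} {x : ℝ} (hF : ContDiffOn ℝ 4 F s)
    (hs : IsOpen s) (hx : x ∈ s) (hF' : deriv F x ≠ 0) :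
    DifferentiableAt ℝ (schwarzian F) x := by
  have h1 : DifferentiableAt ℝ (deriv^[1] F) x :=
    hF.differentiableAt_iterate_deriv hs hx (by norm_num)
  have h2 : DifferentiableAt ℝ (deriv^[2] F) x :=
    hF.differentiableAt_iterate_deriv hs hx (by norm_num)
  have h3 : DifferentiableAt ℝ (deriv^[3] F) x :=
    hF.differentiableAt_iterate_deriv hs hx (by norm_num)
  exact (h3.div h1 hF').sub (((h2.div h1 hF').pow 2).const_mul _)

noncomputable def transformedI₁ (F I₁ : ℝ → ℝ) (x : ℝ) : ℝ :=
  deriv F x ^ 2 * I₁ (F x) - 2 * schwarzian F x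

theorem hasDerivAt_transformedI₁ {F I₁ : ℝ → ℝ} {x F'' I₁' S' : ℝ}
    (hF : DifferentiableAt ℝ F x) (hF'' : HasDerivAt (deriv F) F'' x)
    (hI₁ : HasDerivAt I₁ I₁' (F x)) (hS : HasDerivAt (schwarzian F) S' x) :
    HasDerivAt (transformedI₁ F I₁)
      (2 * deriv F x * F'' * I₁ (F x) + deriv F x ^ 3 * I₁' - 2 * S') x := by
  refine (((hF''.pow 2).mul (hI₁.comp x hF.hasDerivAt)).sub (hS.const_mul 2)).congr_deriv ?_
  simp only [Pi.pow_apply, Function.comp_apply, Nat.cast_ofNat, Nat.add_one_sub_one, pow_one]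
  ring

theorem stmt_6_general (a b a' b' : ℝ) (I J : Set ℝ)
    (hI : I = Set.Ioo a b) (hJ : J = Set.Ioo a' b')
    (I₁ I₀ : ℝ → ℝ) (hI₁ : ContDiffOn ℝ 1 I₁ J)
    (F : ℝ → ℝ) (hF : ContDiffOn ℝ 5 F I)
    (hF' : ∀ x ∈ I, deriv F x ≠ 0) (hFI : Set.MapsTo F I J)
    (SF : ℝ → ℝ)
    (hSF : ∀ x ∈ I, SF x = deriv (deriv (deriv F)) x / deriv F x
        - (3 / 2) * (deriv (deriv F) x / deriv F x) ^ 2)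
    (tI₁ tI₀ : ℝ → ℝ)
    (htI₁ : ∀ x ∈ I, tI₁ x = (deriv F x) ^ 2 * I₁ (F x) - 2 * SF x)
    (htI₀ : ∀ x ∈ I, tI₀ x = deriv F x * deriv (deriv F) x * I₁ (F x)
        + (deriv F x) ^ 3 * I₀ (F x) - deriv SF x) :
    ∀ x ∈ I, deriv tI₁ x - 2 * tI₀ x
      = (deriv F x) ^ 3 * (deriv I₁ (F x) - 2 * I₀ (F x)) := by
  intro x hx
  have hIo : IsOpen I := hI ▸ isOpen_Ioo
  have hSF_eq : SF =ᶠ[𝓝 x] schwarzian F := eventuallyEq_of_mem (hIo.mem_nhds hx) hSF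
  have htI₁_eq : tI₁ =ᶠ[𝓝 x] transformedI₁ F I₁ := by
    filter_upwards [eventuallyEq_of_mem (hIo.mem_nhds hx) htI₁, hSF_eq] with y hy hSy
    rw [hy, hSy, transformedI₁]
  have hF₀ : DifferentiableAt ℝ F x :=
    hF.differentiableAt_iterate_deriv hIo hx (k := 0) (by norm_num)
  have hF₁ : DifferentiableAt ℝ (deriv F) x :=
    hF.differentiableAt_iterate_deriv hIo hx (k := 1) (by norm_num)
  have hI₁_diff : DifferentiableAt ℝ I₁ (F x) :=
    (hI₁.contDiffAt ((hJ ▸ isOpen_Ioo).mem_nhds (hFI hx))).differentiableAt one_ne_zero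
  have hS_diff : DifferentiableAt ℝ (schwarzian F) x :=
    differentiableAt_schwarzian (hF.of_le (by norm_num)) hIo hx (hF' x hx)
  rw [htI₁_eq.deriv_eq, (hasDerivAt_transformedI₁ hF₀ hF₁.hasDerivAt hI₁_diff.hasDerivAt
    hS_diff.hasDerivAt).deriv, htI₀ x hx, hSF_eq.deriv_eq]
  ring

/-- `r = I₁' - 2I₀` is a relative invariant of weight 3 under a change of
independent variable `x → F(x)`: `Ĩ₁' - 2Ĩ₀ = F'³·(I₁'∘F - 2I₀∘F)`. -/
theorem stmt_6 (a b a' b' : ℝ) (I J : Set ℝ)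
    (hI : I = Set.Ioo a b) (hJ : J = Set.Ioo a' b')
    (I₁ I₀ : ℝ → ℝ) (hI₁ : ContDiffOn ℝ 1 I₁ J) (hI₀ : ContinuousOn I₀ J)
    (F : ℝ → ℝ) (hF : ContDiffOn ℝ 5 F I)
    (hF' : ∀ x ∈ I, deriv F x ≠ 0) (hFI : Set.MapsTo F I J)
    (SF : ℝ → ℝ)
    (hSF : ∀ x ∈ I, SF x = deriv (deriv (deriv F)) x / deriv F x
        - (3 / 2) * (deriv (deriv F) x / deriv F x) ^ 2)
    (tI₁ tI₀ : ℝ → ℝ)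
    (htI₁ : ∀ x ∈ I, tI₁ x = (deriv F x) ^ 2 * I₁ (F x) - 2 * SF x)
    (htI₀ : ∀ x ∈ I, tI₀ x = deriv F x * deriv (deriv F) x * I₁ (F x)
        + (deriv F x) ^ 3 * I₀ (F x) - deriv SF x) :
    ∀ x ∈ I, deriv tI₁ x - 2 * tI₀ x
      = (deriv F x) ^ 3 * (deriv I₁ (F x) - 2 * I₀ (F x)) :=
  stmt_6_general a b a' b' I J hI hJ I₁ I₀ hI₁ F hF hF' hFI SF hSF tI₁ tI₀ htI₁ htI₀
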